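/- Under the assumptions of the sampling/safety reconstruction theorem (so that every ρ-small d-simplex of the flat Delaunay complex is delloc in P at scale ρ and has circumradius at most ε, with 2R(σ) ≤ ρ), every d-simplex σ of FlatDel(P,ρ) is a Gabriel simplex of P, and consequently FlatDel(P,ρ) ⊆ Del(P). More precisely: if σ is delloc in P at scale ρ and 2R(σ) ≤ ρ, then σ is a Gabriel simplex of P. -/

import Mathlib

open Metric Set
open scoped Classical

noncomputable section

abbrev Euc (N : ℕ) := EuclideanSpace ℝ (Fin N)

variable {N : ℕ}

/-- The medial axis of `A`: points with at least two closest points in `A`. -/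
def medialAxis (A : Set (Euc N)) : Set (Euc N) :=
  {x | ∃ a ∈ A, ∃ b ∈ A, a ≠ b ∧ dist x a = infDist x A ∧ dist x b = infDist x A}

/-- `p` is a nearest point of `A` to `x`. -/
def IsNearestPt (A : Set (Euc N)) (x p : Euc N) : Prop :=
  p ∈ A ∧ dist x p = infDist x A

/-- `π` is a nearest-point projection map onto `A`, defined off the medial axis. -/
def IsNearestPtProj (A : Set (Euc N)) (π : Euc N → Euc N) : Prop :=
  ∀ x, x ∉ medialAxis A → IsNearestPt A x (π x)

/-- The angle between two linear subspaces: sup over unit vectors of `V₀` of the inf of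
angles with unit vectors of `V₁`. -/
def subAngle (V₀ V₁ : Submodule ℝ (Euc N)) : ℝ :=
  sSup {a | ∃ v₀ ∈ V₀, ‖v₀‖ = 1 ∧
    a = sInf {b | ∃ v₁ ∈ V₁, ‖v₁‖ = 1 ∧ b = InnerProductGeometry.angle v₀ v₁}}

/-- Angle between two affine subspaces. -/
def affAngle (H₀ H₁ : AffineSubspace ℝ (Euc N)) : ℝ :=
  subAngle H₀.direction H₁.direction

/-- Angle between the line through `u, v` and the affine subspace `H`. -/
def lineAngle (u v : Euc N) (H : AffineSubspace ℝ (Euc N)) : ℝ :=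
  subAngle (Submodule.span ℝ {v - u}) H.direction

/-- Orthogonal projection onto an affine subspace (the identity if `H` is empty). -/
def projA (H : AffineSubspace ℝ (Euc N)) (x : Euc N) : Euc N :=
  if h : (H : Set (Euc N)).Nonempty then
    h.choose + (Submodule.orthogonalProjection H.direction (x - h.choose) : Euc N)
  else x

/-- The minimal height of a simplex (over all vertices, distance to opposite facet). -/
def height (σ : Finset (Euc N)) : ℝ :=
  sInf ((fun v => infDist v (affineSpan ℝ ((σ.erase v : Finset (Euc N)) : Set (Euc N)))) '' σ)

/-- `σ` is a non-degenerate simplex: its vertices are affinely independent. -/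
def Nondegenerate (σ : Finset (Euc N)) : Prop :=
  AffineIndependent ℝ (fun p : σ => (p : Euc N))

/-- The sphere centered at `z` of radius `r` circumscribes `σ`. -/
def IsCircum (σ : Finset (Euc N)) (z : Euc N) (r : ℝ) : Prop :=
  ∀ p ∈ σ, dist p z = r

/-- `(z, r)` is the smallest circumscribing sphere of `σ`. -/
def IsMinCircum (σ : Finset (Euc N)) (z : Euc N) (r : ℝ) : Prop :=
  IsCircum σ z r ∧ ∀ z' r', IsCircum σ z' r' → r ≤ r'

/-- `(c, r)` is the smallest enclosing ball of `σ`. -/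
def IsSEB (σ : Finset (Euc N)) (c : Euc N) (r : ℝ) : Prop :=
  (∀ p ∈ σ, dist p c ≤ r) ∧ ∀ c' r', (∀ p ∈ σ, dist p c' ≤ r') → r ≤ r'

/-- `σ` is a Delaunay simplex of the point set `Q`: some circumscribing sphere of `σ`
bounds a ball containing no point of `Q` in its interior. -/
def IsDelaunay (Q : Set (Euc N)) (σ : Finset (Euc N)) : Prop :=
  (σ : Set (Euc N)) ⊆ Q ∧ ∃ z r, IsCircum σ z r ∧ ∀ q ∈ Q, r ≤ dist q z

/-- Separation of a point set: infimum of pairwise distances. -/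
def sep (X : Set (Euc N)) : ℝ :=
  sInf {r | ∃ x ∈ X, ∃ y ∈ X, x ≠ y ∧ r = dist x y}

/-- A relation is a multiplicative `M`-distortion. -/
def MulDistortion (R : Set (Euc N × Euc N)) (M : ℝ) : Prop :=
  ∀ p ∈ R, ∀ q ∈ R,
    (1 / (1 + M)) * dist p.1 q.1 ≤ dist p.2 q.2 ∧ dist p.2 q.2 ≤ (1 + M) * dist p.1 q.1

/-- A relation is an additive `A`-distortion. -/
def AddDistortion (R : Set (Euc N × Euc N)) (A : ℝ) : Prop :=
  ∀ p ∈ R, ∀ q ∈ R, |dist p.2 q.2 - dist p.1 q.1| ≤ A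

/-- A relation is one-to-one: injective and functional. -/
def OneToOneRel (R : Set (Euc N × Euc N)) : Prop :=
  (∀ p ∈ R, ∀ q ∈ R, p.2 = q.2 → p.1 = q.1) ∧ (∀ p ∈ R, ∀ q ∈ R, p.1 = q.1 → p.2 = q.2)

/-- `M` is a `C²` `d`-dimensional submanifold of `ℝᴺ` with tangent spaces given by `T`. -/
def IsC2Submanifold (d : ℕ) (M : Set (Euc N)) (T : Euc N → Submodule ℝ (Euc N)) : Prop :=
  ∀ m ∈ M, ∃ (φ : EuclideanSpace ℝ (Fin d) → Euc N) (U : Set (Euc N)),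
    IsOpen U ∧ m ∈ U ∧ ContDiff ℝ 2 φ ∧ Function.Injective φ ∧
    (∀ x, Function.Injective (fderiv ℝ φ x)) ∧
    Set.range φ = M ∩ U ∧
    ∀ x, T (φ x) = LinearMap.range ((fderiv ℝ φ x).toLinearMap)

/-- The family of affine spaces associated to a simplex `σ`: the affine hull of `σ`
together with the tangent spaces at projections of points of `Conv σ` onto `M`. -/
def stdFamily (σ : Finset (Euc N)) (T : Euc N → Submodule ℝ (Euc N)) (πM : Euc N → Euc N) :
    Set (AffineSubspace ℝ (Euc N)) :=
  insert (affineSpan ℝ (σ : Set (Euc N)))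
    ((fun x => AffineSubspace.mk' (πM x) (T (πM x))) '' convexHull ℝ (σ : Set (Euc N)))

end


/-!
Projection onto the affine hull `H` of `σ` fixes `σ`, so the delloc hypothesis gives a sphere
`(z', r')` through `σ` enclosing no projected point of `P ∩ B(c, ρ)`. The foot of `z'` in `H` is
equidistant from `σ`, hence it is the circumcentre `z`, and Pythagoras gives
`r'² = r² + |z' - z|²`. So every projected point, and a fortiori every point of `P ∩ B(c, ρ)`, is
at distance at least `r` from `z`. The remaining points of `P` are farther than `ρ ≥ 2r` from `c`,
and the centre `c` of the smallest enclosing ball lies within `r` of `z` (otherwise pulling it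
towards `z` would shrink the ball), so they too are at distance at least `r` from `z`.
-/

open EuclideanGeometry

section EuclideanAffine

variable {V P : Type*} [NormedAddCommGroup V] [InnerProductSpace ℝ V] [MetricSpace P]
  [NormedAddTorsor V P]

theorem eq_of_mem_affineSpan_of_forall_dist_eq {s : Set P} {c₁ c₂ : P} {r₁ r₂ : ℝ}
    (hc₁ : c₁ ∈ affineSpan ℝ s) (hc₂ : c₂ ∈ affineSpan ℝ s)
    (h₁ : ∀ p ∈ s, dist p c₁ = r₁) (h₂ : ∀ p ∈ s, dist p c₂ = r₂) : c₁ = c₂ := by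
  have hdir : c₂ -ᵥ c₁ ∈ vectorSpan ℝ s :=
    direction_affineSpan ℝ s ▸ AffineSubspace.vsub_mem_direction hc₂ hc₁
  have horth : vectorSpan ℝ s ≤ (ℝ ∙ (c₂ -ᵥ c₁))ᗮ := by
    refine Submodule.span_le.2 ?_
    rintro _ ⟨p, hp, q, hq, rfl⟩
    rw [SetLike.mem_coe, Submodule.mem_orthogonal_singleton_iff_inner_right]
    exact inner_vsub_vsub_of_dist_eq_of_dist_eq (by rw [h₁ q hq, h₁ p hp])
      (by rw [h₂ q hq, h₂ p hp])
  have hzero : c₂ -ᵥ c₁ = 0 :=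
    inner_self_eq_zero.1 (Submodule.mem_orthogonal_singleton_iff_inner_right.1 (horth hdir))
  exact (vsub_eq_zero_iff_eq.1 hzero).symm

theorem dist_orthogonalProjection_le_of_mem {s : AffineSubspace ℝ P} [Nonempty s]
    [s.direction.HasOrthogonalProjection] {y : P} (hy : y ∈ s) (x : P) :
    dist y (orthogonalProjection s x) ≤ dist y x := by
  have := dist_sq_eq_dist_orthogonalProjection_sq_add_dist_orthogonalProjection_sq x hy
  exact (mul_self_le_mul_self_iff dist_nonneg dist_nonneg).2
    (by nlinarith [mul_self_nonneg (dist x (orthogonalProjection s x))])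

end EuclideanAffine

/-- `z + (r / dist c z) • (c - z)` is the point where the segment from `z` to `c` leaves the
ball `closedBall z r`; it is closer than `c` to every point of that ball by a Pythagorean
margin. -/
theorem dist_sq_add_sq_le_of_dist_le {E : Type*} [NormedAddCommGroup E] [InnerProductSpace ℝ E]
    {z c p : E} {r : ℝ} (hrD : r < dist c z) (hp : dist p z ≤ r) :
    dist p (z + (r / dist c z) • (c - z)) ^ 2 + (dist c z - r) ^ 2 ≤ dist p c ^ 2 := by
  set D := dist c z
  have hr : 0 ≤ r := dist_nonneg.trans hp
  have hD : 0 < D := hr.trans_lt hrD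
  set s := r / D
  have hsD : s * D = r := div_mul_cancel₀ r hD.ne'
  have hs1 : 0 ≤ 1 - s := sub_nonneg.2 ((div_le_one hD).2 hrD.le)
  have hnorm : ‖c - z‖ = D := (dist_eq_norm c z).symm
  have hinner : inner ℝ (p - z) (c - z) ≤ r * D :=
    (real_inner_le_norm _ _).trans (by rw [hnorm, ← dist_eq_norm]; gcongr)
  have hp' : p - (z + s • (c - z)) = (p - z) - s • (c - z) := by abel
  have hc : p - c = (p - z) - (c - z) := by abel
  rw [dist_eq_norm, dist_eq_norm, hp', hc, norm_sub_sq_real (p - z), norm_sub_sq_real (p - z),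
    norm_smul, real_inner_smul_right, hnorm, Real.norm_of_nonneg (div_nonneg hr hD.le),
    mul_pow, ← mul_pow, hsD]
  nlinarith [mul_le_mul_of_nonneg_left hinner hs1]

variable {N : ℕ}

theorem projA_eq_orthogonalProjection (H : AffineSubspace ℝ (Euc N)) [Nonempty H] (x : Euc N) :
    projA H x = orthogonalProjection H x := by
  have hne : (H : Set (Euc N)).Nonempty := nonempty_subtype.1 ‹_›
  set a := hne.choose
  have ha : a ∈ H := hne.choose_spec
  have hK : H.direction.starProjection (x - a) ∈ H.direction := Submodule.coe_mem _
  rw [projA, dif_pos hne, eq_comm, coe_orthogonalProjection_eq_iff_mem]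
  constructor
  · rw [add_comm]
    exact AffineSubspace.vadd_mem_of_mem_direction hK ha
  · rw [vsub_eq_sub, ← sub_sub]
    exact Submodule.sub_starProjection_mem_orthogonal (x - a)

theorem projA_eq_self {H : AffineSubspace ℝ (Euc N)} {x : Euc N} (hx : x ∈ H) :
    projA H x = x := by
  have : Nonempty H := ⟨⟨x, hx⟩⟩
  rw [projA_eq_orthogonalProjection, orthogonalProjection_eq_self_iff.2 hx]

theorem image_projA_affineSpan (σ : Finset (Euc N)) :
    σ.image (projA (affineSpan ℝ (σ : Set (Euc N)))) = σ := by
  rw [Finset.image_congr fun p hp => projA_eq_self (subset_affineSpan ℝ _ hp), Finset.image_id']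

theorem IsMinCircum.nonempty {σ : Finset (Euc N)} {z : Euc N} {r : ℝ} (h : IsMinCircum σ z r) :
    σ.Nonempty := by
  rw [Finset.nonempty_iff_ne_empty]
  rintro rfl
  have := h.2 z (r - 1) (by simp [IsCircum])
  linarith

theorem IsMinCircum.mem_affineSpan {σ : Finset (Euc N)} {z : Euc N} {r : ℝ}
    (h : IsMinCircum σ z r) : z ∈ affineSpan ℝ (σ : Set (Euc N)) := by
  obtain ⟨p₀, hp₀⟩ := h.nonempty
  set H := affineSpan ℝ (σ : Set (Euc N))
  have : Nonempty H := ⟨⟨p₀, subset_affineSpan ℝ _ hp₀⟩⟩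
  set d := dist z (orthogonalProjection H z)
  have hpyth : ∀ p ∈ σ, dist p (orthogonalProjection H z) * dist p (orthogonalProjection H z) =
      r * r - d * d := fun p hp => by
    have := dist_sq_eq_dist_orthogonalProjection_sq_add_dist_orthogonalProjection_sq z
      (subset_affineSpan ℝ _ hp)
    rw [h.1 p hp] at this
    linarith
  have hle : r ≤ √(r * r - d * d) :=
    h.2 _ _ fun p hp => by rw [← hpyth p hp, Real.sqrt_mul_self dist_nonneg]
  have hd : d * d ≤ 0 := by
    rw [← hpyth p₀ hp₀, Real.sqrt_mul_self dist_nonneg] at hle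
    nlinarith [mul_self_le_mul_self (h.1 p₀ hp₀ ▸ dist_nonneg) hle, hpyth p₀ hp₀]
  exact dist_orthogonalProjection_eq_zero_iff.1
    (mul_self_eq_zero.1 (hd.antisymm (mul_self_nonneg d)))

theorem IsMinCircum.orthogonalProjection_eq {σ : Finset (Euc N)} {z z' : Euc N} {r r' : ℝ}
    (hmc : IsMinCircum σ z r) [Nonempty (affineSpan ℝ (σ : Set (Euc N)))]
    (hz' : IsCircum σ z' r') : orthogonalProjection (affineSpan ℝ (σ : Set (Euc N))) z' = z := by
  obtain ⟨r₀, hr₀⟩ := (exists_dist_eq_iff_exists_dist_orthogonalProjection_eq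
    (subset_affineSpan ℝ _) z').1 ⟨r', hz'⟩
  exact eq_of_mem_affineSpan_of_forall_dist_eq (orthogonalProjection_mem z')
    hmc.mem_affineSpan hr₀ hmc.1

theorem IsSEB.dist_le_of_forall_dist_le {σ : Finset (Euc N)} (hne : σ.Nonempty) {c z : Euc N}
    {rc r : ℝ} (hseb : IsSEB σ c rc) (hσ : ∀ p ∈ σ, dist p z ≤ r) : dist c z ≤ r := by
  obtain ⟨p₀, hp₀⟩ := hne
  by_contra! hlt
  set D := dist c z
  have hshrink : ∀ p ∈ σ, dist p (z + (r / D) • (c - z)) ^ 2 ≤ rc ^ 2 - (D - r) ^ 2 :=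
    fun p hp => by
      nlinarith [dist_sq_add_sq_le_of_dist_le hlt (hσ p hp),
        pow_le_pow_left₀ dist_nonneg (hseb.1 p hp) 2]
  have hnn : 0 ≤ rc ^ 2 - (D - r) ^ 2 := (sq_nonneg _).trans (hshrink p₀ hp₀)
  have hle : rc ≤ √(rc ^ 2 - (D - r) ^ 2) :=
    hseb.2 _ _ fun p hp => (Real.le_sqrt dist_nonneg hnn).2 (hshrink p hp)
  rw [Real.le_sqrt (dist_nonneg.trans (hseb.1 p₀ hp₀)) hnn] at hle
  nlinarith [sub_pos.2 hlt]

theorem IsMinCircum.le_dist_of_isDelaunay_image_projA {σ : Finset (Euc N)} {z : Euc N} {r : ℝ}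
    (hmc : IsMinCircum σ z r) {Q : Set (Euc N)}
    (hdel : IsDelaunay (projA (affineSpan ℝ (σ : Set (Euc N))) '' Q)
      (σ.image (projA (affineSpan ℝ (σ : Set (Euc N))))))
    {q : Euc N} (hq : q ∈ Q) : r ≤ dist q z := by
  set H := affineSpan ℝ (σ : Set (Euc N))
  obtain ⟨p₀, hp₀⟩ := hmc.nonempty
  have : Nonempty H := ⟨⟨p₀, subset_affineSpan ℝ _ hp₀⟩⟩
  obtain ⟨-, z', r', hcirc, hempty⟩ := hdel
  rw [image_projA_affineSpan] at hcirc
  have hz : (orthogonalProjection H z' : Euc N) = z := hmc.orthogonalProjection_eq hcirc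
  have hpyth : ∀ y ∈ H, dist y z' * dist y z' = dist y z * dist y z + dist z' z * dist z' z :=
    fun y hy => by
      simpa only [hz] using
        dist_sq_eq_dist_orthogonalProjection_sq_add_dist_orthogonalProjection_sq z' hy
  set q' : Euc N := ↑(orthogonalProjection H q)
  have hq' : r' ≤ dist q' z' := hempty _ ⟨q, hq, projA_eq_orthogonalProjection H q⟩
  have hr' : r' * r' = r * r + dist z' z * dist z' z := by
    rw [← hcirc p₀ hp₀, ← hmc.1 p₀ hp₀]
    exact hpyth p₀ (subset_affineSpan ℝ _ hp₀)
  have hrq' : r ≤ dist q' z := by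
    refine (mul_self_le_mul_self_iff (hmc.1 p₀ hp₀ ▸ dist_nonneg) dist_nonneg).2 ?_
    nlinarith [hpyth q' (orthogonalProjection_mem q),
      mul_self_le_mul_self (hcirc p₀ hp₀ ▸ dist_nonneg) hq']
  calc r ≤ dist q' z := hrq'
    _ ≤ dist q z := by
      rw [dist_comm q', dist_comm q]
      exact dist_orthogonalProjection_le_of_mem hmc.mem_affineSpan q

theorem delloc_implies_gabriel_general (N : ℕ) (P σ : Finset (Euc N))
    (hσP : σ ⊆ P)
    (ρ : ℝ) (c : Euc N) (rc : ℝ) (hseb : IsSEB σ c rc)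
    (z : Euc N) (r : ℝ) (hmc : IsMinCircum σ z r)
    (hdelloc : IsDelaunay
      (projA (affineSpan ℝ (σ : Set (Euc N))) '' ((P : Set (Euc N)) ∩ closedBall c ρ))
      (σ.image (projA (affineSpan ℝ (σ : Set (Euc N))))))
    (h2R : 2 * r ≤ ρ) :
    (∀ p ∈ P, r ≤ dist p z) ∧ IsDelaunay (P : Set (Euc N)) σ := by
  have hcz : dist c z ≤ r :=
    hseb.dist_le_of_forall_dist_le hmc.nonempty fun p hp => (hmc.1 p hp).le
  have hgabriel : ∀ p ∈ P, r ≤ dist p z := by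
    intro p hp
    by_cases hpc : dist p c ≤ ρ
    · exact hmc.le_dist_of_isDelaunay_image_projA hdelloc ⟨hp, mem_closedBall.2 hpc⟩
    · linarith [dist_triangle p z c, dist_comm z c]
  exact ⟨hgabriel, Finset.coe_subset.2 hσP, z, r, hmc.1, hgabriel⟩

theorem delloc_implies_gabriel (N d : ℕ) (P σ : Finset (Euc N))
    (hσP : σ ⊆ P) (hσ : Nondegenerate σ) (hcard : σ.card = d + 1)
    (ρ : ℝ) (c : Euc N) (rc : ℝ) (hseb : IsSEB σ c rc)
    (z : Euc N) (r : ℝ) (hmc : IsMinCircum σ z r)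
    (hdelloc : IsDelaunay
      (projA (affineSpan ℝ (σ : Set (Euc N))) '' ((P : Set (Euc N)) ∩ closedBall c ρ))
      (σ.image (projA (affineSpan ℝ (σ : Set (Euc N))))))
    (h2R : 2 * r ≤ ρ) :
    (∀ p ∈ P, r ≤ dist p z) ∧ IsDelaunay (P : Set (Euc N)) σ :=
  delloc_implies_gabriel_general N P σ hσP ρ c rc hseb z r hmc hdelloc h2R
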